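/- arXiv:1305.2874 — 2 statements merged into one kernel-verified Lean document; each statement's English description precedes it below -/
import Mathlib

section
/- Let $V$ be a finite-dimensional vector space over a field $F$ of characteristic zero, and let $\phi : V \times V \to F$ be a nondegenerate symplectic (alternating) bilinear form. Let $\mathrm{Sp}(V, \phi)$ be the group of linear automorphisms preserving $\phi$. Then the space of $\mathrm{Sp}(V,\phi)$-invariant bilinear forms on $V$ (i.e. $\mathrm{Sp}(V,\phi)$-equivariant linear maps $V \otimes V \to F$ for the trivial action on $F$) is one-dimensional, spanned by $\phi$. -/
/-!
A symplectic transvection `v ↦ v + φ(v, u) u` fixes every `w` with `φ(u, w) = 0` and moves `v`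
by a multiple of `u`, so invariance of `ψ` under it forces `φ(v, u) ψ(u, w) = 0`; choosing `v`
with `φ(v, u) ≠ 0` by nondegeneracy, `ψ` vanishes wherever `φ` does. Two bilinear forms with
this property are proportional, already by linear algebra.
-/

namespace LinearMap

variable {K V W : Type*} [Field K] [AddCommGroup V] [Module K V] [AddCommGroup W] [Module K W]

theorem apply_eq_div_mul_of_ker_le {f g : W →ₗ[K] K} (h : ker f ≤ ker g) {w₀ : W}
    (hw₀ : f w₀ ≠ 0) (w : W) : g w = g w₀ / f w₀ * f w := by
  have hker : f w₀ • w - f w • w₀ ∈ ker f := by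
    simp [mul_comm]
  have hg : f w₀ * g w - f w * g w₀ = 0 := by simpa using h hker
  rw [div_mul_eq_mul_div, eq_div_iff hw₀]
  linear_combination hg

theorem exists_eq_smul_of_apply_eq_zero_imp {B C : V →ₗ[K] W →ₗ[K] K}
    (h : ∀ x y, B x y = 0 → C x y = 0) : ∃ c : K, C = c • B := by
  by_cases hB : ∀ x y, B x y = 0
  · exact ⟨0, by ext x y; simp [h x y (hB x y)]⟩
  obtain ⟨x₀, y₀, h₀⟩ : ∃ x y, B x y ≠ 0 := by simpa using hB
  set c := C x₀ y₀ / B x₀ y₀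
  have row : ∀ y, C x₀ y = c * B x₀ y :=
    apply_eq_div_mul_of_ker_le (f := B x₀) (g := C x₀) (fun y => h x₀ y) h₀
  have col : ∀ y, B x₀ y ≠ 0 → ∀ x, C x y = c * B x y := by
    intro y hy x
    refine (apply_eq_div_mul_of_ker_le (f := B.flip y) (g := C.flip y)
      (fun x => h x y) hy x).trans ?_
    simp only [flip_apply, row y]
    field_simp
  refine ⟨c, ext₂ fun x y => ?_⟩
  rw [smul_apply, smul_apply, smul_eq_mul]
  by_cases hy : B x₀ y = 0
  · -- `y + y₀` lies off the hyperplane `ker (B x₀)`, where `col` applies.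
    have hsum := col (y + y₀) (by simpa [hy] using h₀) x
    simp only [map_add] at hsum
    linear_combination hsum - col y₀ h₀ x
  · exact col y hy x

end LinearMap

section Symplectic

variable {F V : Type*} [Field F] [AddCommGroup V] [Module F V] {φ : LinearMap.BilinForm F V}

def symplecticTransvection (hφ : φ.IsAlt) (u : V) : V ≃ₗ[F] V :=
  LinearEquiv.transvection (f := φ.flip u) (v := u) (hφ u)

theorem symplecticTransvection_apply (hφ : φ.IsAlt) (u v : V) :
    symplecticTransvection hφ u v = v + φ v u • u :=
  rfl

theorem apply_symplecticTransvection (hφ : φ.IsAlt) (u v w : V) :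
    φ (symplecticTransvection hφ u v) (symplecticTransvection hφ u w) = φ v w := by
  simp only [symplecticTransvection_apply, map_add, map_smul, LinearMap.add_apply,
    LinearMap.smul_apply, smul_eq_mul, hφ u]
  linear_combination -φ v u * LinearMap.IsAlt.neg hφ u w

theorem LinearMap.BilinForm.IsAlt.apply_eq_zero_of_invariant (hφ : φ.IsAlt)
    (hsep : φ.SeparatingRight) {ψ : LinearMap.BilinForm F V}
    (hψ : ∀ g : V ≃ₗ[F] V, (∀ v w : V, φ (g v) (g w) = φ v w) →
      ∀ v w : V, ψ (g v) (g w) = ψ v w)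
    {u w : V} (huw : φ u w = 0) : ψ u w = 0 := by
  by_cases hu : u = 0
  · simp [hu]
  obtain ⟨v, hvu⟩ : ∃ v, φ v u ≠ 0 := by
    by_contra! h
    exact hu (hsep u h)
  have hfix : symplecticTransvection hφ u w = w := by
    simp [symplecticTransvection_apply, hφ.eq_iff.mp huw]
  have hinv := hψ _ (apply_symplecticTransvection hφ u) v w
  rw [hfix, symplecticTransvection_apply, map_add, map_smul, LinearMap.add_apply,
    LinearMap.smul_apply, smul_eq_mul, add_eq_left] at hinv
  exact (mul_eq_zero.mp hinv).resolve_left hvu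

end Symplectic

theorem symplectic_invariant_bilinear_forms_general
    {F V : Type*} [Field F] [AddCommGroup V] [Module F V]
    (φ : LinearMap.BilinForm F V) (hnd : φ.Nondegenerate)
    (halt : ∀ v : V, φ v v = 0)
    (ψ : LinearMap.BilinForm F V)
    (hψ : ∀ g : V ≃ₗ[F] V, (∀ v w : V, φ (g v) (g w) = φ v w) →
      ∀ v w : V, ψ (g v) (g w) = ψ v w) :
    ∃ c : F, ψ = c • φ :=
  LinearMap.exists_eq_smul_of_apply_eq_zero_imp fun _ _ =>
    LinearMap.BilinForm.IsAlt.apply_eq_zero_of_invariant halt hnd.2 hψ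

/-- The space of `Sp(V,φ)`-invariant bilinear forms on a finite-dimensional symplectic
space `(V, φ)` over a field of characteristic zero is spanned by `φ`. -/
theorem symplectic_invariant_bilinear_forms
    {F V : Type*} [Field F] [CharZero F] [AddCommGroup V] [Module F V]
    [FiniteDimensional F V]
    (φ : LinearMap.BilinForm F V) (hnd : φ.Nondegenerate)
    (halt : ∀ v : V, φ v v = 0)
    (ψ : LinearMap.BilinForm F V)
    (hψ : ∀ g : V ≃ₗ[F] V, (∀ v w : V, φ (g v) (g w) = φ v w) →
      ∀ v w : V, ψ (g v) (g w) = ψ v w) :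
    ∃ c : F, ψ = c • φ :=
  symplectic_invariant_bilinear_forms_general φ hnd halt ψ hψ
end

section
/- Let $V$ be a finite-dimensional vector space over a field $F$ of characteristic zero equipped with a nondegenerate symmetric bilinear form $\phi$, and let $\mathrm{O}(V,\phi)$ be its orthogonal group. Then the space of $\mathrm{O}(V,\phi)$-invariant bilinear forms on $V$ is one-dimensional, spanned by $\phi$. -/
/-!
The reflection `x ↦ x - (2 φ(v,x) / φ(v,v)) • v` in an anisotropic vector `v` lies in `O(V,φ)`,
and invariance of `ψ` under it forces `ψ(v,·) = (ψ(v,v) / φ(v,v)) φ(v,·)`. So every anisotropic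
vector is an eigenvector of the endomorphism `T` with `ψ(x,y) = φ(Tx,y)`. For anisotropic `w` and
any `v`, the quadratic `t ↦ φ(v + tw, v + tw)` cannot vanish at all of `t = 1, -1, 2`; this makes
the eigenvalues of two anisotropic vectors agree and writes every vector as a difference of two
anisotropic ones, so `T` is a homothety.
-/

namespace Module.End

variable {F V : Type*} [Field F] [AddCommGroup V] [Module F V]

theorem eq_of_apply_add_eq_smul {T : End F V} {v w : V} {a b c : F} (hv : v ≠ 0) (hw : w ≠ 0)
    (hTv : T v = a • v) (hTw : T w = b • w) (hTvw : T (v + w) = c • (v + w)) : a = b := by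
  by_contra hab
  have hind : LinearIndependent F ![v, w] :=
    T.eigenvectors_linearIndependent' ![a, b] (by simpa [Function.Injective, Fin.forall_fin_two]
      using ⟨hab, Ne.symm hab⟩) ![v, w] (by
      intro i; fin_cases i <;> simp [hasEigenvector_iff, *])
  have hrel : (c - a) • v + (c - b) • w = 0 := by
    rw [map_add, hTv, hTw] at hTvw
    linear_combination (norm := module) -hTvw
  obtain ⟨hca, hcb⟩ := LinearIndependent.pair_iff.mp hind _ _ hrel
  exact hab (by linear_combination hcb - hca)

end Module.End

namespace LinearMap.BilinForm

variable {F V : Type*} [Field F] [AddCommGroup V] [Module F V]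
  {φ ψ : LinearMap.BilinForm F V} {v : V}

variable (φ) in
noncomputable def reflection (hv : φ v v ≠ 0) : V ≃ₗ[F] V :=
  Module.reflection (x := v) (f := (2 / φ v v) • φ v) (by simp [hv])

theorem reflection_apply (hv : φ v v ≠ 0) (x : V) :
    φ.reflection hv x = x - (2 / φ v v * φ v x) • v :=
  Module.reflection_apply x _

theorem reflection_apply_self (hv : φ v v ≠ 0) : φ.reflection hv v = -v :=
  Module.reflection_apply_self _

theorem isOrthogonal_reflection (hφ : LinearMap.IsSymm φ) (hv : φ v v ≠ 0) :
    φ.IsOrthogonal (φ.reflection hv) := by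
  intro x y
  have hxv : φ x v = φ v x := hφ.eq x v
  simp only [reflection_apply, map_sub, map_smul, LinearMap.sub_apply, LinearMap.smul_apply,
    smul_eq_mul, hxv]
  field_simp
  ring

theorem apply_eq_smul_of_isOrthogonal_reflection [NeZero (2 : F)] (hv : φ v v ≠ 0)
    (hψ : ψ.IsOrthogonal (φ.reflection hv)) : ψ v = (ψ v v / φ v v) • φ v := by
  ext x
  have h := hψ v x
  simp only [reflection_apply_self, reflection_apply, map_neg, map_sub, map_smul,
    LinearMap.neg_apply, LinearMap.smul_apply, smul_eq_mul] at h ⊢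
  exact mul_left_cancel₀ two_ne_zero (by linear_combination -h)

theorem symmCompOfNondegenerate_apply_eq_smul [FiniteDimensional F V] [NeZero (2 : F)]
    (hnd : φ.Nondegenerate) (hv : φ v v ≠ 0) (hψ : ψ.IsOrthogonal (φ.reflection hv)) :
    ψ.symmCompOfNondegenerate φ hnd v = (ψ v v / φ v v) • v :=
  (φ.toDual hnd).injective <| LinearMap.ext fun x ↦ by
    rw [toDual_def, toDual_def, symmCompOfNondegenerate_left_apply, map_smul]
    exact LinearMap.congr_fun (apply_eq_smul_of_isOrthogonal_reflection hv hψ) x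

theorem exists_ne_zero_apply_add_smul_ne_zero [CharZero F] {w : V} (hw : φ w w ≠ 0) (v : V) :
    ∃ t : F, t ≠ 0 ∧ φ (v + t • w) (v + t • w) ≠ 0 := by
  by_contra! h
  have h₁ := h 1 one_ne_zero
  have h₂ := h (-1) (neg_ne_zero.mpr one_ne_zero)
  have h₃ := h 2 two_ne_zero
  simp only [map_add, map_smul, LinearMap.add_apply, LinearMap.smul_apply, smul_eq_mul] at h₁ h₂ h₃
  exact hw (by linear_combination (2 * h₃ - 3 * h₁ + h₂) / 6)

theorem exists_eq_smul_one_of_forall_apply_self_ne_zero [CharZero F] {T : Module.End F V}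
    (hT : ∀ v, φ v v ≠ 0 → ∃ a : F, T v = a • v) {v₀ : V} (hv₀ : φ v₀ v₀ ≠ 0) :
    ∃ c : F, T = c • 1 := by
  obtain ⟨c, hc⟩ := hT v₀ hv₀
  have h_aniso : ∀ v, φ v v ≠ 0 → T v = c • v := by
    intro v hv
    obtain ⟨a, ha⟩ := hT v hv
    obtain ⟨t, ht, hu⟩ := exists_ne_zero_apply_add_smul_ne_zero hv₀ v
    obtain ⟨b, hb⟩ := hT _ hu
    have hv0 : v ≠ 0 := by rintro rfl; simp at hv
    have htv₀ : t • v₀ ≠ 0 := smul_ne_zero ht (by rintro rfl; simp at hv₀)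
    rw [ha, Module.End.eq_of_apply_add_eq_smul hv0 htv₀ ha (by rw [map_smul, hc, smul_comm]) hb]
  refine ⟨c, LinearMap.ext fun y ↦ ?_⟩
  obtain ⟨t, -, hu⟩ := exists_ne_zero_apply_add_smul_ne_zero hv₀ y
  have hTu := h_aniso _ hu
  rw [map_add, map_smul, hc] at hTu
  simp only [LinearMap.smul_apply, Module.End.one_apply]
  linear_combination (norm := module) hTu

end LinearMap.BilinForm

open LinearMap.BilinForm in
/-- The space of `O(V,φ)`-invariant bilinear forms on a finite-dimensional vector space
with a nondegenerate symmetric bilinear form `φ` over a field of characteristic zero is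
spanned by `φ`. -/
theorem orthogonal_invariant_bilinear_forms
    {F V : Type*} [Field F] [CharZero F] [AddCommGroup V] [Module F V]
    [FiniteDimensional F V]
    (φ : LinearMap.BilinForm F V) (hnd : φ.Nondegenerate)
    (hsymm : ∀ v w : V, φ v w = φ w v)
    (ψ : LinearMap.BilinForm F V)
    (hψ : ∀ g : V ≃ₗ[F] V, (∀ v w : V, φ (g v) (g w) = φ v w) →
      ∀ v w : V, ψ (g v) (g w) = ψ v w) :
    ∃ c : F, ψ = c • φ := by
  have hφ : LinearMap.IsSymm φ := ⟨hsymm⟩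
  rcases subsingleton_or_nontrivial V with _ | _
  · exact ⟨0, Subsingleton.elim _ _⟩
  have : Invertible (2 : F) := invertibleOfNonzero two_ne_zero
  obtain ⟨v₀, hv₀⟩ :=
    exists_bilinForm_self_ne_zero (fun h ↦ not_nondegenerate_zero F V (h ▸ hnd)) hφ
  obtain ⟨c, hc⟩ := exists_eq_smul_one_of_forall_apply_self_ne_zero
    (T := ψ.symmCompOfNondegenerate φ hnd)
    (fun v hv ↦ ⟨_, symmCompOfNondegenerate_apply_eq_smul hnd hv
      (hψ _ (isOrthogonal_reflection hφ hv))⟩) hv₀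
  refine ⟨c, LinearMap.ext₂ fun x y ↦ ?_⟩
  rw [← symmCompOfNondegenerate_left_apply ψ hnd, hc]
  simp
end
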